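/- arXiv:1811.08285 — 2 statements merged into one kernel-verified Lean document; each statement's English description precedes it below -/
import Mathlib

section
/- The constant γ_∞ = inf_{p ∈ (4/3, 2)} ((p−1)/(2−p))^{2(p−1)/p} · π^{−1/2} · 4^{−1/p} / (Γ(2/p) Γ(3−2/p)) satisfies γ_∞ < 1/5. -/
open Set

noncomputable section

/-- The constant `γ_∞`. -/
def gammaInf : ℝ :=
  sInf { g : ℝ | ∃ p : ℝ, p ∈ Set.Ioo (4 / 3 : ℝ) 2 ∧
    g = ((p - 1) / (2 - p)) ^ (2 * (p - 1) / p) *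
      (Real.pi ^ (-(1 : ℝ) / 2) * (4 : ℝ) ^ (-(1 / p))
        / (Real.Gamma (2 / p) * Real.Gamma (3 - 2 / p))) }

lemma gamma_prod_lb :
    Real.pi / 4 ≤ Real.Gamma (22 / 15) * Real.Gamma (23 / 15) := by
  have h22 : (0:ℝ) < 22/15 := by norm_num
  have h23 : (0:ℝ) < 23/15 := by norm_num
  have hg22 := Real.Gamma_pos_of_pos h22
  have hg23 := Real.Gamma_pos_of_pos h23
  have hconv := Real.convexOn_log_Gamma.2 (mem_Ioi.mpr h22) (mem_Ioi.mpr h23)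
      (by norm_num : (0:ℝ) ≤ 1/2) (by norm_num : (0:ℝ) ≤ 1/2) (by norm_num)
  simp only [smul_eq_mul, Function.comp_apply] at hconv
  rw [show (1/2 : ℝ) * (22/15) + (1/2) * (23/15) = 3/2 by norm_num] at hconv
  have hG32 : Real.Gamma (3/2) = Real.sqrt Real.pi / 2 := by
    have h := Real.Gamma_add_one (by norm_num : (1/2:ℝ) ≠ 0)
    rw [show (3/2:ℝ) = 1/2 + 1 by norm_num, h, Real.Gamma_one_half_eq]; ring
  have hG32pos : 0 < Real.Gamma (3/2) := Real.Gamma_pos_of_pos (by norm_num)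
  have h2 : Real.log (Real.Gamma (3/2) ^ 2)
      ≤ Real.log (Real.Gamma (22/15) * Real.Gamma (23/15)) := by
    rw [Real.log_pow, Real.log_mul hg22.ne' hg23.ne']
    push_cast
    linarith
  have h3 : Real.Gamma (3/2) ^ 2 ≤ Real.Gamma (22/15) * Real.Gamma (23/15) :=
    (Real.log_le_log_iff (by positivity) (by positivity)).mp h2
  have h4 : Real.Gamma (3/2) ^ 2 = Real.pi / 4 := by
    rw [hG32, div_pow, Real.sq_sqrt Real.pi_pos.le]; norm_num
  linarith

lemma hA_bound : ((4:ℝ)/7) ^ ((8:ℝ)/15) ≤ 0.7425 := by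
  apply le_of_pow_le_pow_left₀ (n := 15) (by norm_num) (by norm_num)
  rw [← Real.rpow_natCast (((4:ℝ)/7) ^ ((8:ℝ)/15)) 15, ← Real.rpow_mul (by norm_num)]
  rw [show ((8:ℝ)/15 * (15:ℕ)) = ((8:ℕ):ℝ) by push_cast; ring, Real.rpow_natCast]
  norm_num

lemma hC_bound : (4:ℝ) ^ (-(11/15 : ℝ)) ≤ 0.3621 := by
  apply le_of_pow_le_pow_left₀ (n := 15) (by norm_num) (by norm_num)
  rw [← Real.rpow_natCast ((4:ℝ) ^ (-(11/15:ℝ))) 15, ← Real.rpow_mul (by norm_num)]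
  rw [show (-(11/15:ℝ) * (15:ℕ)) = ((-11 : ℤ) : ℝ) by push_cast; ring, Real.rpow_intCast]
  norm_num

lemma hB_bound : Real.pi ^ (-(1:ℝ)/2) ≤ 0.5642 := by
  rw [show (-(1:ℝ)/2) = -(1/2) by ring, Real.rpow_neg Real.pi_pos.le,
    ← Real.sqrt_eq_rpow]
  have h : (1.77245:ℝ) ≤ Real.sqrt Real.pi := by
    rw [show (1.77245:ℝ) = Real.sqrt (1.77245^2) by
      rw [Real.sqrt_sq (by norm_num)]]
    exact Real.sqrt_le_sqrt (by nlinarith [Real.pi_gt_d6])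
  have h2 : (Real.sqrt Real.pi)⁻¹ ≤ (1.77245:ℝ)⁻¹ := by
    apply inv_anti₀ (by norm_num) h
  calc (Real.sqrt Real.pi)⁻¹ ≤ (1.77245:ℝ)⁻¹ := h2
    _ ≤ 0.5642 := by norm_num

lemma key_value_lt :
    ((4:ℝ)/7) ^ ((8:ℝ)/15) *
      (Real.pi ^ (-(1:ℝ)/2) * (4:ℝ) ^ (-(11/15 : ℝ))
        / (Real.Gamma (22/15) * Real.Gamma (23/15))) < 1/5 := by
  have hpi := Real.pi_gt_d6
  have hD : (3.141592/4 : ℝ) ≤ Real.Gamma (22/15) * Real.Gamma (23/15) :=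
    le_trans (by linarith) gamma_prod_lb
  have hA0 : (0:ℝ) ≤ ((4:ℝ)/7) ^ ((8:ℝ)/15) := Real.rpow_nonneg (by norm_num) _
  have hB0 : (0:ℝ) ≤ Real.pi ^ (-(1:ℝ)/2) := Real.rpow_nonneg Real.pi_pos.le _
  have hC0 : (0:ℝ) ≤ (4:ℝ) ^ (-(11/15:ℝ)) := Real.rpow_nonneg (by norm_num) _
  calc ((4:ℝ)/7) ^ ((8:ℝ)/15) *
      (Real.pi ^ (-(1:ℝ)/2) * (4:ℝ) ^ (-(11/15 : ℝ))
        / (Real.Gamma (22/15) * Real.Gamma (23/15)))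
      ≤ 0.7425 * (0.5642 * 0.3621 / (3.141592/4)) := by
        gcongr
        · exact hA_bound
        · exact hB_bound
        · exact hC_bound
    _ < 1/5 := by norm_num

/-- The constant `γ_∞` is smaller than `1/5`. -/
theorem gammaInf_lt_one_fifth : gammaInf < 1 / 5 := by
  have hbdd : BddBelow { g : ℝ | ∃ p : ℝ, p ∈ Set.Ioo (4 / 3 : ℝ) 2 ∧
      g = ((p - 1) / (2 - p)) ^ (2 * (p - 1) / p) *
        (Real.pi ^ (-(1 : ℝ) / 2) * (4 : ℝ) ^ (-(1 / p))
          / (Real.Gamma (2 / p) * Real.Gamma (3 - 2 / p))) } := by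
    refine ⟨0, fun g hg => ?_⟩
    obtain ⟨p, hp, rfl⟩ := hg
    have hp0 : (0:ℝ) < p := by linarith [hp.1]
    have h1 : 0 < Real.Gamma (2/p) := Real.Gamma_pos_of_pos (by positivity)
    have h2 : 0 < Real.Gamma (3 - 2/p) := by
      apply Real.Gamma_pos_of_pos
      have : 2/p < 3 := by rw [div_lt_iff₀ hp0]; linarith [hp.1]
      linarith
    apply mul_nonneg
    · exact Real.rpow_nonneg (div_nonneg (by linarith [hp.1]) (by linarith [hp.2])) _
    · exact div_nonneg
        (mul_nonneg (Real.rpow_nonneg Real.pi_pos.le _) (Real.rpow_nonneg (by norm_num) _))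
        (mul_pos h1 h2).le
  have hmem : (((15/11:ℝ) - 1) / (2 - 15/11)) ^ (2 * ((15/11:ℝ) - 1) / (15/11)) *
      (Real.pi ^ (-(1:ℝ)/2) * (4:ℝ) ^ (-(1/(15/11:ℝ)))
        / (Real.Gamma (2/(15/11)) * Real.Gamma (3 - 2/(15/11)))) ∈
      { g : ℝ | ∃ p : ℝ, p ∈ Set.Ioo (4 / 3 : ℝ) 2 ∧
        g = ((p - 1) / (2 - p)) ^ (2 * (p - 1) / p) *
          (Real.pi ^ (-(1 : ℝ) / 2) * (4 : ℝ) ^ (-(1 / p))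
            / (Real.Gamma (2 / p) * Real.Gamma (3 - 2 / p))) } :=
    ⟨15/11, by constructor <;> norm_num, rfl⟩
  refine lt_of_le_of_lt (csInf_le hbdd hmem) ?_
  have h := key_value_lt
  rw [show ((15/11:ℝ) - 1) / (2 - 15/11) = 4/7 by norm_num,
    show 2 * ((15/11:ℝ) - 1) / (15/11) = 8/15 by norm_num,
    show -(1/(15/11:ℝ)) = -(11/15:ℝ) by norm_num,
    show 3 - 2/(15/11:ℝ) = 23/15 by norm_num,
    show 2/(15/11:ℝ) = 22/15 by norm_num]
  exact h
end
end

section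
/- For every integer k ≥ 2, the image Ω_k = ψ_k(𝔻) of the open unit disc under ψ_k(z) = z + z^k/k contains the open disc of radius (k−1)²/k² centered at the origin; equivalently, with t = k²/(k−1)², the unit disc satisfies 𝔻 ⊆ tΩ_k = {tw : w ∈ Ω_k}. -/
/-!
Write `ψ_k = id + g` with `g z = z ^ k / k`. On the closed disc of radius `ρ < 1`, `g` is
`ρ ^ (k - 1)`-Lipschitz and bounded by `ρ ^ k / k`, so for `‖w‖ ≤ ρ - ρ ^ k / k` the map
`z ↦ w - g z` is a contraction of that disc, and its Banach fixed point solves `ψ_k z = w`.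
The choice `ρ = (k - 1) / k` gives `ρ - ρ ^ k / k ≥ ρ - ρ / k = (k - 1)² / k²`.
-/

open Metric Set NNReal Pointwise

theorem closedBall_subset_image_add_of_lipschitzOnWith {E : Type*} [NormedAddCommGroup E]
    [CompleteSpace E] {g : E → E} {K : ℝ≥0} {r M : ℝ}
    (hr : 0 ≤ r) (hK : K < 1) (hg : LipschitzOnWith K g (closedBall 0 r))
    (hgM : ∀ z ∈ closedBall (0 : E) r, ‖g z‖ ≤ M) :
    closedBall 0 (r - M) ⊆ (fun z => z + g z) '' closedBall 0 r := by
  intro w hw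
  rw [mem_closedBall_zero_iff] at hw
  have hmaps : MapsTo (fun z => w - g z) (closedBall 0 r) (closedBall 0 r) := fun z hz => by
    rw [mem_closedBall_zero_iff]
    calc ‖w - g z‖ ≤ ‖w‖ + ‖g z‖ := norm_sub_le _ _
      _ ≤ r := by linarith [hgM z hz]
  have hlip : LipschitzOnWith K (fun z => w - g z) (closedBall 0 r) := by
    simpa using (LipschitzWith.const w).lipschitzOnWith.sub hg
  obtain ⟨z, hz, hfix, -⟩ := ContractingWith.exists_fixedPoint' isClosed_closedBall.isComplete
    hmaps ⟨hK, hlip.mapsToRestrict hmaps⟩ (mem_closedBall_self hr) (edist_ne_top _ _)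
  exact ⟨z, hz, eq_sub_iff_add_eq.mp hfix.symm⟩

theorem lipschitzOnWith_pow_div_natCast_closedBall {𝕜 : Type*} [RCLike 𝕜] {n : ℕ} (hn : n ≠ 0)
    (r : ℝ≥0) : LipschitzOnWith (r ^ (n - 1)) (fun z : 𝕜 => z ^ n / n) (closedBall 0 r) := by
  refine (convex_closedBall 0 r).lipschitzOnWith_of_nnnorm_hasDerivWithin_le
    (fun z _ => ((hasDerivAt_pow n z).div_const (n : 𝕜)).hasDerivWithinAt) fun z hz => ?_
  have hz' : ‖z‖₊ ≤ r := by simpa [← NNReal.coe_le_coe] using hz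
  rw [mul_div_cancel_left₀ _ (Nat.cast_ne_zero.mpr hn), nnnorm_pow]
  gcongr

theorem closedBall_subset_image_add_pow_div_natCast {𝕜 : Type*} [RCLike 𝕜] {n : ℕ} (hn : 2 ≤ n)
    {ρ : ℝ} (hρ0 : 0 ≤ ρ) (hρ1 : ρ < 1) :
    closedBall 0 (ρ - ρ ^ n / n) ⊆ (fun z : 𝕜 => z + z ^ n / n) '' closedBall 0 ρ := by
  refine closedBall_subset_image_add_of_lipschitzOnWith hρ0
    (pow_lt_one₀ bot_le (show (⟨ρ, hρ0⟩ : ℝ≥0) < 1 from hρ1) (by omega))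
    (lipschitzOnWith_pow_div_natCast_closedBall (by omega) ⟨ρ, hρ0⟩) fun z hz => ?_
  rw [mem_closedBall_zero_iff] at hz
  rw [norm_div, norm_pow, RCLike.norm_natCast]
  gcongr

theorem ball_one_subset_smul_of_ball_subset {E : Type*} [NormedAddCommGroup E] [NormedSpace ℝ E]
    {c : ℝ} (hc : 0 < c) {S : Set E} (h : ball 0 c ⊆ S) : ball (0 : E) 1 ⊆ c⁻¹ • S :=
  calc ball (0 : E) 1 = c⁻¹ • ball 0 c := by rw [← smul_unitBall_of_pos hc, inv_smul_smul₀ hc.ne']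
    _ ⊆ c⁻¹ • S := smul_set_mono h

/-- For every integer `k ≥ 2`, the image `Ω_k = ψ_k(𝔻)` of the open unit disc
under `ψ_k(z) = z + z^k/k` contains the open disc of radius `(k−1)²/k²` centered
at the origin; equivalently, with `t = k²/(k−1)²`, we have `𝔻 ⊆ t Ω_k`. -/
theorem ball_subset_image_psi (k : ℕ) (hk : 2 ≤ k) :
    Metric.ball (0 : ℂ) (((k : ℝ) - 1) ^ 2 / (k : ℝ) ^ 2) ⊆
      (fun z : ℂ => z + z ^ k / k) '' Metric.ball (0 : ℂ) 1 ∧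
    Metric.ball (0 : ℂ) 1 ⊆
      (fun w : ℂ => (((k : ℝ) ^ 2 / ((k : ℝ) - 1) ^ 2 : ℝ) : ℂ) * w) ''
        ((fun z : ℂ => z + z ^ k / k) '' Metric.ball (0 : ℂ) 1) := by
  have hk' : (2 : ℝ) ≤ k := by exact_mod_cast hk
  set ρ : ℝ := ((k : ℝ) - 1) / k
  have hk1 : (0 : ℝ) < k - 1 := by linarith
  have hρ0 : 0 ≤ ρ := by positivity
  have hρ1 : ρ < 1 := (div_lt_one (by positivity)).mpr (by linarith)
  have hradius : ((k : ℝ) - 1) ^ 2 / (k : ℝ) ^ 2 ≤ ρ - ρ ^ k / k :=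
    calc ((k : ℝ) - 1) ^ 2 / (k : ℝ) ^ 2 = ρ - ρ / k := by simp only [ρ]; field_simp
      _ ≤ ρ - ρ ^ k / k := by gcongr; exact pow_le_of_le_one hρ0 hρ1.le (by omega)
  have hball : ball (0 : ℂ) (((k : ℝ) - 1) ^ 2 / (k : ℝ) ^ 2) ⊆
      (fun z : ℂ => z + z ^ k / k) '' ball 0 1 :=
    calc _ ⊆ closedBall (0 : ℂ) (ρ - ρ ^ k / k) :=
          ball_subset_closedBall.trans (closedBall_subset_closedBall hradius)
      _ ⊆ _ '' closedBall 0 ρ := closedBall_subset_image_add_pow_div_natCast hk hρ0 hρ1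
      _ ⊆ _ '' ball 0 1 := image_mono (closedBall_subset_ball hρ1)
  refine ⟨hball, ?_⟩
  have := ball_one_subset_smul_of_ball_subset (by positivity) hball
  rwa [inv_div, ← Set.image_smul] at this
end
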